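/- If PSL(2,7) acts transitively on a finite set Σ with |Σ| ≤ 41, then |Σ| ∈ {1, 7, 8, 14, 21, 24, 28}. -/

import Mathlib

/-- `SL(2,7)`, the special linear group of `2 × 2` matrices over `𝔽₇`. -/
abbrev SL27 : Type := Matrix.SpecialLinearGroup (Fin 2) (ZMod 7)

/-- `PSL(2,7)`, the projective special linear group, a simple group of order `168`. -/
abbrev PSL27 : Type := SL27 ⧸ Subgroup.center SL27

/-!
The size of a transitive `PSL(2,7)`-set is the index of a point stabiliser `H`, so it divides `168`.
The divisors of `168` up to `41` missing from the list are `2, 3, 4, 6, 12`, that is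
`|H| ∈ {84, 56, 42, 28, 14}`: divisible by `7` but not dividing `21`. A subgroup `H` with `7 ∣ |H|`
has one or eight Sylow `7`-subgroups. With one, `H` normalises a Sylow `7`-subgroup of `PSL(2,7)`,
whose normaliser has order `168 / 8 = 21`. With eight, `H` contains all eight Sylow `7`-subgroups
of `PSL(2,7)`, hence the images `u`, `l` of the unipotent matrices `!![1, 1; 0, 1]`,
`!![1, 0; 1, 1]` and the element `u * l ^ 4` of order `3`; so `8 * 3 * 7 ∣ |H|`.
-/

open Subgroup

instance : Fact (Nat.Prime 7) := ⟨by norm_num⟩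

theorem not_dvd_index_of_dvd_card {G : Type*} [Group G] {p : ℕ} {H : Subgroup G}
    (h2 : ¬ p ^ 2 ∣ Nat.card G) (h : p ∣ Nat.card H) : ¬ p ∣ H.index := fun hi =>
  h2 (card_mul_index H ▸ pow_two p ▸ mul_dvd_mul h hi)

section Sylow

variable {G : Type*} [Group G] {p : ℕ}

theorem exists_sylow_mem_of_orderOf_eq {g : G} (hg : orderOf g = p) :
    ∃ P : Sylow p G, g ∈ P := by
  have hg' : IsPGroup p (zpowers g) :=
    IsPGroup.of_card (n := 1) (by rw [Nat.card_zpowers, hg, pow_one])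
  obtain ⟨P, hP⟩ := hg'.exists_le_sylow
  exact ⟨P, hP (mem_zpowers g)⟩

variable [hp : Fact p.Prime] [Finite G]

theorem Sylow.card_eq_of_dvd_of_not_sq_dvd (P : Sylow p G) (h : p ∣ Nat.card G)
    (h2 : ¬ p ^ 2 ∣ Nat.card G) : Nat.card P = p := by
  rw [← pow_one p, hp.out.pow_dvd_iff_le_factorization Nat.card_pos.ne'] at h
  rw [hp.out.pow_dvd_iff_le_factorization Nat.card_pos.ne'] at h2
  rw [P.card_eq_multiplicity, show (Nat.card G).factorization p = 1 by omega, pow_one]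

variable {H : Subgroup G}

theorem exists_sylow_coe_eq_map_subtype (hH : ¬ p ∣ H.index) (Q : Sylow p H) :
    ∃ P : Sylow p G, (P : Subgroup G) = (Q : Subgroup H).map H.subtype :=
  ⟨(Q.isPGroup'.map H.subtype).toSylow
    (by rw [index_map_subtype]; exact hp.out.not_dvd_mul Q.not_dvd_index hH), rfl⟩

theorem sylow_le_of_card_sylow_eq (hH : ¬ p ∣ H.index)
    (hcard : Nat.card (Sylow p H) = Nat.card (Sylow p G)) (P : Sylow p G) :
    (P : Subgroup G) ≤ H := by
  choose f hf using exists_sylow_coe_eq_map_subtype hH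
  have hinj : Function.Injective f := fun Q₁ Q₂ h => Sylow.ext <|
    map_injective H.subtype_injective <| by rw [← hf, ← hf, h]
  obtain ⟨Q, rfl⟩ := (hinj.bijective_of_nat_card_le hcard.ge).2 P
  exact hf Q ▸ map_subtype_le _

theorem exists_le_normalizer_sylow_of_subsingleton (hH : ¬ p ∣ H.index)
    [Subsingleton (Sylow p H)] :
    ∃ P : Sylow p G, H ≤ normalizer (P : Set G) := by
  let Q : Sylow p H := default
  obtain ⟨P, hP⟩ := exists_sylow_coe_eq_map_subtype hH Q
  refine ⟨P, ?_⟩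
  have hQ : normalizer ((Q : Subgroup H) : Set H) = ⊤ :=
    normalizer_eq_top_iff.mpr (Sylow.normal_of_subsingleton Q)
  calc H = (normalizer ((Q : Subgroup H) : Set H)).map H.subtype := by
        rw [hQ, ← MonoidHom.range_eq_map, range_subtype]
    _ ≤ normalizer (P : Set G) := by
        rw [← Sylow.coe_coe, hP]; exact le_normalizer_map _

end Sylow

theorem card_sylow_seven_eq_one_or_eight {G : Type*} [Group G] [Finite G]
    (hG : Nat.card G ∣ 168) : Nat.card (Sylow 7 G) = 1 ∨ Nat.card (Sylow 7 G) = 8 := by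
  have hdvd : Nat.card (Sylow 7 G) ∣ 168 :=
    ((Sylow.card_dvd_index default).trans (index_dvd_card _)).trans hG
  have hmod : Nat.card (Sylow 7 G) % 7 = 1 := card_sylow_modEq_one 7 G
  have key : ∀ n ∈ Nat.divisors 168, n % 7 = 1 → n = 1 ∨ n = 8 := by decide
  exact key _ (Nat.mem_divisors.mpr ⟨hdvd, by norm_num⟩) hmod

theorem mem_of_mul_eq_168 {a b : ℕ} (hab : a * b = 168) (hb : b ≤ 41)
    (ha : 7 ∣ a → a ∣ 21 ∨ a = 168) : b ∈ ({1, 7, 8, 14, 21, 24, 28} : Set ℕ) := by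
  obtain rfl : a = 168 / b := by
    rw [← hab, Nat.mul_div_cancel a (Nat.pos_of_ne_zero (by rintro rfl; simp at hab))]
  have key : ∀ b ∈ Nat.divisors 168, b ≤ 41 → (7 ∣ 168 / b → 168 / b ∣ 21 ∨ 168 / b = 168) →
      b ∈ ({1, 7, 8, 14, 21, 24, 28} : Finset ℕ) := by decide
  simpa using key b (Nat.mem_divisors.mpr ⟨Dvd.intro_left _ hab, by norm_num⟩) hb ha

set_option maxRecDepth 40000 in
theorem card_SL27 : Nat.card SL27 = 336 := by
  rw [Nat.card_eq_fintype_card]; decide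

theorem card_center_SL27 : Nat.card (center SL27) = 2 := by
  rw [Nat.card_congr Matrix.SpecialLinearGroup.center_equiv_rootsOfUnity.toEquiv]
  exact (IsPrimitiveRoot.neg_one 7 (by norm_num)).card_rootsOfUnity

theorem card_PSL27 : Nat.card PSL27 = 168 := by
  have h := card_eq_card_quotient_mul_card_subgroup (center SL27)
  rw [card_SL27, card_center_SL27] at h
  show Nat.card (SL27 ⧸ center SL27) = 168
  omega

namespace QuotientGroup

open scoped commutatorElement

variable {G : Type*} [Group G]

theorem mk_center_ne_one_of_mul_ne {g z : G} (h : g * z ≠ z * g) : (z : G ⧸ center G) ≠ 1 := by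
  rw [Ne, eq_one_iff, mem_center_iff]
  exact fun hz => h (hz g)

theorem orderOf_mk_center {p : ℕ} [Fact p.Prime] {g z : G} (hz : z ^ p = 1) (h : g * z ≠ z * g) :
    orderOf (z : G ⧸ center G) = p :=
  orderOf_eq_prime (by rw [← mk_pow, hz, mk_one]) (mk_center_ne_one_of_mul_ne h)

theorem not_commute_mk_center {g a b : G} (h : g * ⁅a, b⁆ ≠ ⁅a, b⁆ * g) :
    ¬ Commute (a : G ⧸ center G) (b : G ⧸ center G) := fun hab =>
  mk_center_ne_one_of_mul_ne h <| by
    rw [← mk'_apply, map_commutatorElement, mk'_apply, mk'_apply,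
      commutatorElement_eq_one_iff_commute.mpr hab]

end QuotientGroup

namespace SL27

def upperUnipotent : SL27 := ⟨!![1, 1; 0, 1], by decide⟩

def lowerUnipotent : SL27 := ⟨!![1, 0; 1, 1], by decide⟩

theorem orderOf_upperUnipotent : orderOf (upperUnipotent : PSL27) = 7 :=
  QuotientGroup.orderOf_mk_center (g := lowerUnipotent) (by decide) (by decide)

theorem orderOf_lowerUnipotent : orderOf (lowerUnipotent : PSL27) = 7 :=
  QuotientGroup.orderOf_mk_center (g := upperUnipotent) (by decide) (by decide)

theorem orderOf_upperUnipotent_mul_lowerUnipotent_pow_four :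
    orderOf ((upperUnipotent : PSL27) * (lowerUnipotent : PSL27) ^ 4) = 3 := by
  rw [← QuotientGroup.mk_pow, ← QuotientGroup.mk_mul]
  exact QuotientGroup.orderOf_mk_center (g := upperUnipotent) (by decide) (by decide)

theorem not_commute_upperUnipotent_lowerUnipotent :
    ¬ Commute (upperUnipotent : PSL27) (lowerUnipotent : PSL27) :=
  QuotientGroup.not_commute_mk_center (g := upperUnipotent) (by decide)

end SL27

namespace PSL27

open SL27

theorem card_sylow_seven : Nat.card (Sylow 7 PSL27) = 8 := by
  refine (card_sylow_seven_eq_one_or_eight card_PSL27.dvd).resolve_left fun h1 => ?_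
  have : Subsingleton (Sylow 7 PSL27) := (Nat.card_eq_one_iff_unique.mp h1).1
  obtain ⟨P, hu⟩ := exists_sylow_mem_of_orderOf_eq orderOf_upperUnipotent
  obtain ⟨Q, hl⟩ := exists_sylow_mem_of_orderOf_eq orderOf_lowerUnipotent
  -- both would lie in the unique Sylow `7`-subgroup, which is cyclic
  rw [Subsingleton.elim Q P] at hl
  have : IsCyclic P := isCyclic_of_prime_card <|
    P.card_eq_of_dvd_of_not_sq_dvd (by rw [card_PSL27]; norm_num) (by rw [card_PSL27]; norm_num)
  exact not_commute_upperUnipotent_lowerUnipotent (setLike_mul_comm hu hl)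

theorem card_normalizer_sylow_seven (P : Sylow 7 PSL27) :
    Nat.card (normalizer (P : Set PSL27)) = 21 := by
  have h := card_mul_index (normalizer (P : Set PSL27))
  rw [← P.card_eq_index_normalizer, card_sylow_seven, card_PSL27] at h
  omega

theorem card_subgroup_dvd_21_or_eq_168 (H : Subgroup PSL27) (h7 : 7 ∣ Nat.card H) :
    Nat.card H ∣ 21 ∨ Nat.card H = 168 := by
  have hH : ¬ 7 ∣ H.index := not_dvd_index_of_dvd_card (by rw [card_PSL27]; norm_num) h7
  have hHdvd : Nat.card H ∣ 168 := card_PSL27 ▸ card_subgroup_dvd_card H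
  rcases card_sylow_seven_eq_one_or_eight hHdvd with hone | height
  · have : Subsingleton (Sylow 7 H) := (Nat.card_eq_one_iff_unique.mp hone).1
    obtain ⟨P, hP⟩ := exists_le_normalizer_sylow_of_subsingleton hH
    exact Or.inl (card_normalizer_sylow_seven P ▸ card_dvd_of_le hP)
  · have hle := sylow_le_of_card_sylow_eq hH (height.trans card_sylow_seven.symm)
    obtain ⟨P, hu⟩ := exists_sylow_mem_of_orderOf_eq orderOf_upperUnipotent
    obtain ⟨Q, hl⟩ := exists_sylow_mem_of_orderOf_eq orderOf_lowerUnipotent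
    have h3 : 3 ∣ Nat.card H := orderOf_upperUnipotent_mul_lowerUnipotent_pow_four ▸
      H.orderOf_dvd_natCard (H.mul_mem (hle P hu) (H.pow_mem (hle Q hl) 4))
    have h8 : 8 ∣ Nat.card H :=
      height ▸ (Sylow.card_dvd_index default).trans (index_dvd_card _)
    have hle168 : Nat.card H ≤ 168 := Nat.le_of_dvd (by norm_num) hHdvd
    have hpos : 0 < Nat.card H := Nat.card_pos
    right
    omega

end PSL27

theorem card_of_transitive_PSL27_action_general (S : Type*) [MulAction PSL27 S]
    [Nonempty S] (htrans : MulAction.IsPretransitive PSL27 S) (hcard : Nat.card S ≤ 41) :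
    Nat.card S ∈ ({1, 7, 8, 14, 21, 24, 28} : Set ℕ) := by
  obtain ⟨s⟩ := ‹Nonempty S›
  have hidx : (MulAction.stabilizer PSL27 s).index = Nat.card S := by
    rw [MulAction.index_stabilizer, MulAction.orbit_eq_univ, Set.ncard_univ]
  have hmul := card_mul_index (MulAction.stabilizer PSL27 s)
  rw [hidx, card_PSL27] at hmul
  exact mem_of_mul_eq_168 hmul hcard (PSL27.card_subgroup_dvd_21_or_eq_168 _)

/-- If `PSL(2,7)` acts transitively on a finite set `Σ` with `|Σ| ≤ 41`, then
`|Σ| ∈ {1, 7, 8, 14, 21, 24, 28}`. -/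
theorem card_of_transitive_PSL27_action (S : Type*) [MulAction PSL27 S] [Finite S]
    [Nonempty S] (htrans : MulAction.IsPretransitive PSL27 S) (hcard : Nat.card S ≤ 41) :
    Nat.card S ∈ ({1, 7, 8, 14, 21, 24, 28} : Set ℕ) :=
  card_of_transitive_PSL27_action_general S htrans hcard
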